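/- Let G be a finite simple graph with connected components C_1, …, C_p, and for each i let F_i be an editing set of the induced subgraph G[C_i] of minimum cardinality. Then F = F_1 ∪ … ∪ F_p is an editing set of G of minimum cardinality. -/
import Mathlib


open SimpleGraph

/-- The graph `G △ F`: edge set is the symmetric difference of `G`'s edge set and `F`. -/
def editGraph {V : Type*} (G : SimpleGraph V) (F : Set (Sym2 V)) : SimpleGraph V :=
  SimpleGraph.fromEdgeSet (symmDiff G.edgeSet F)

/-- The set `C` is a biclique in `G`: it splits into two nonempty disjoint independent
sets with all edges in between. -/
def IsBicliqueOn {V : Type*} (G : SimpleGraph V) (C : Set V) : Prop :=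
  ∃ V1 V2 : Set V, V1 ∪ V2 = C ∧ Disjoint V1 V2 ∧ V1.Nonempty ∧ V2.Nonempty ∧
    (∀ a ∈ V1, ∀ b ∈ V1, ¬ G.Adj a b) ∧
    (∀ a ∈ V2, ∀ b ∈ V2, ¬ G.Adj a b) ∧
    (∀ a ∈ V1, ∀ b ∈ V2, G.Adj a b)

/-- `G` is a bicluster graph: every connected component with at least two vertices
is a biclique. -/
def IsBiclusterGraph {V : Type*} (G : SimpleGraph V) : Prop :=
  ∀ v : V, 2 ≤ ({u | G.Reachable v u}).ncard → IsBicliqueOn G {u | G.Reachable v u}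

/-- The four (distinct) vertices `a, b, c, d` induce a path `a - b - c - d` in `G`. -/
def InducesP4 {V : Type*} (G : SimpleGraph V) (a b c d : V) : Prop :=
  a ≠ b ∧ a ≠ c ∧ a ≠ d ∧ b ≠ c ∧ b ≠ d ∧ c ≠ d ∧
  G.Adj a b ∧ G.Adj b c ∧ G.Adj c d ∧ ¬ G.Adj a c ∧ ¬ G.Adj b d ∧ ¬ G.Adj a d

lemma editGraph_adj {V : Type*} (G : SimpleGraph V) (F : Set (Sym2 V)) (x y : V) :
    (editGraph G F).Adj x y ↔ (s(x, y) ∈ symmDiff G.edgeSet F) ∧ x ≠ y := by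
  simp [editGraph, fromEdgeSet_adj]

/-- swap halves of a biclique -/
lemma IsBicliqueOn.symmParts {V : Type*} {G : SimpleGraph V} {C : Set V}
    (h : IsBicliqueOn G C) :
    ∃ V1 V2 : Set V, V1 ∪ V2 = C ∧ Disjoint V1 V2 ∧ V1.Nonempty ∧ V2.Nonempty ∧
      (∀ a ∈ V1, ∀ b ∈ V1, ¬ G.Adj a b) ∧
      (∀ a ∈ V2, ∀ b ∈ V2, ¬ G.Adj a b) ∧
      (∀ a ∈ V1, ∀ b ∈ V2, G.Adj a b) ∧
      (∀ a ∈ V2, ∀ b ∈ V1, G.Adj a b) := by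
  obtain ⟨V1, V2, h1, h2, h3, h4, h5, h6, h7⟩ := h
  exact ⟨V1, V2, h1, h2, h3, h4, h5, h6, h7, fun a ha b hb => (h7 b hb a ha).symm⟩

/-- biclique transported through an injective map that reflects adjacency -/
lemma IsBicliqueOn.image {V W : Type*} {G : SimpleGraph V} {H : SimpleGraph W}
    {C : Set V} (f : V → W) (hf : Function.Injective f)
    (hadj : ∀ a ∈ C, ∀ b ∈ C, (G.Adj a b ↔ H.Adj (f a) (f b)))
    (h : IsBicliqueOn G C) : IsBicliqueOn H (f '' C) := by
  obtain ⟨V1, V2, h1, h2, h3, h4, h5, h6, h7⟩ := h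
  have s1 : V1 ⊆ C := h1 ▸ Set.subset_union_left
  have s2 : V2 ⊆ C := h1 ▸ Set.subset_union_right
  refine ⟨f '' V1, f '' V2, by rw [← Set.image_union, h1], Set.disjoint_image_of_injective hf h2,
    h3.image f, h4.image f, ?_, ?_, ?_⟩
  · rintro _ ⟨a, ha, rfl⟩ _ ⟨b, hb, rfl⟩
    exact fun hc => h5 a ha b hb ((hadj a (s1 ha) b (s1 hb)).mpr hc)
  · rintro _ ⟨a, ha, rfl⟩ _ ⟨b, hb, rfl⟩
    exact fun hc => h6 a ha b hb ((hadj a (s2 ha) b (s2 hb)).mpr hc)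
  · rintro _ ⟨a, ha, rfl⟩ _ ⟨b, hb, rfl⟩
    exact (hadj a (s1 ha) b (s2 hb)).mp (h7 a ha b hb)

/-- induced subgraph of a bicluster graph is a bicluster graph -/
lemma IsBiclusterGraph.induce {V : Type*} [Fintype V] {G : SimpleGraph V}
    (h : IsBiclusterGraph G) (S : Set V) : IsBiclusterGraph (G.induce S) := by
  intro v hv
  set R := {u : S | (G.induce S).Reachable v u} with hR
  have hsub : ∀ u : S, u ∈ R → u.val ∈ {u | G.Reachable v.val u} := by
    intro u hu
    exact hu.map (SimpleGraph.Embedding.induce S).toHom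
  have himg : Subtype.val '' R ⊆ {u | G.Reachable v.val u} := by
    rintro _ ⟨u, hu, rfl⟩; exact hsub u hu
  have h2 : 2 ≤ ({u | G.Reachable v.val u}).ncard := by
    calc 2 ≤ R.ncard := hv
    _ = (Subtype.val '' R).ncard := (Set.ncard_image_of_injective R Subtype.val_injective).symm
    _ ≤ _ := Set.ncard_le_ncard himg (Set.toFinite _)
  obtain ⟨V1, V2, hU, hD, _, _, h5, h6, h7, h8⟩ := (h v.val h2).symmParts
  have hvR : v ∈ R := Reachable.refl v
  have key : ∀ V1 V2 : Set V, V1 ∪ V2 = {u | G.Reachable v.val u} → Disjoint V1 V2 →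
      (∀ a ∈ V1, ∀ b ∈ V1, ¬ G.Adj a b) → (∀ a ∈ V2, ∀ b ∈ V2, ¬ G.Adj a b) →
      (∀ a ∈ V1, ∀ b ∈ V2, G.Adj a b) → (v.val ∈ V1) → IsBicliqueOn (G.induce S) R := by
    intro V1 V2 hU hD h5 h6 h7 hv1
    refine ⟨{u : S | u.val ∈ V1 ∧ u ∈ R}, {u : S | u.val ∈ V2 ∧ u ∈ R}, ?_, ?_, ?_, ?_, ?_, ?_, ?_⟩
    · apply Set.Subset.antisymm
      · rintro u (⟨_, hu⟩ | ⟨_, hu⟩) <;> exact hu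
      · intro u hu
        have : u.val ∈ V1 ∪ V2 := hU ▸ hsub u hu
        rcases this with h' | h'
        · exact Or.inl ⟨h', hu⟩
        · exact Or.inr ⟨h', hu⟩
    · rw [Set.disjoint_left]
      rintro u ⟨hu1, _⟩ ⟨hu2, _⟩
      exact Set.disjoint_left.mp hD hu1 hu2
    · exact ⟨v, hv1, hvR⟩
    · -- V2 part is nonempty
      have : 1 < R.ncard := hv
      rw [Set.one_lt_ncard_iff (Set.toFinite R)] at this
      obtain ⟨a, b, ha, hb, hab⟩ := this
      have : ∃ u, u ∈ R ∧ u ≠ v := by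
        by_cases hav : a = v
        · exact ⟨b, hb, fun hbv => hab (hav.trans hbv.symm)⟩
        · exact ⟨a, ha, hav⟩
      obtain ⟨u, huR, hune⟩ := this
      rcases (hU ▸ hsub u huR : u.val ∈ V1 ∪ V2) with h' | h'
      · -- u ∈ V1, u ≠ v : walk from v to u starts with a neighbor in V2
        obtain ⟨w⟩ := huR
        cases w with
        | nil => exact absurd rfl hune
        | @cons _ z _ hadj p =>
          have hzR : z ∈ R := Reachable.refl v |>.trans ⟨hadj.toWalk⟩
          have hGz : G.Adj v.val z.val := hadj
          have hz2 : z.val ∈ V2 := by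
            rcases (hU ▸ hsub z hzR : z.val ∈ V1 ∪ V2) with hz' | hz'
            · exact absurd hGz (h5 v.val hv1 z.val hz')
            · exact hz'
          exact ⟨z, hz2, hzR⟩
      · exact ⟨u, h', huR⟩
    · rintro a ⟨ha, _⟩ b ⟨hb, _⟩ hadj
      exact h5 a.val ha b.val hb hadj
    · rintro a ⟨ha, _⟩ b ⟨hb, _⟩ hadj
      exact h6 a.val ha b.val hb hadj
    · rintro a ⟨ha, _⟩ b ⟨hb, _⟩
      exact h7 a.val ha b.val hb
  rcases (hU ▸ (hsub v hvR) : v.val ∈ V1 ∪ V2) with hv1 | hv2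
  · exact key V1 V2 hU hD h5 h6 h7 hv1
  · exact key V2 V1 (Set.union_comm V1 V2 ▸ hU) hD.symm h6 h5 h8 hv2

/-- a generic cardinality comparison lemma -/
lemma ncard_iUnion_le_of_pairwise {ι α : Type*} [Finite ι] [Finite α]
    (A B : ι → Set α) (hA : Pairwise (Function.onFun Disjoint A))
    (hB : Pairwise (Function.onFun Disjoint B))
    (hle : ∀ i, (A i).ncard ≤ (B i).ncard) (T : Set α) (hBT : ∀ i, B i ⊆ T) :
    (⋃ i, A i).ncard ≤ T.ncard := by
  classical
  have : Fintype ι := Fintype.ofFinite ι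
  suffices h : ∀ s : Finset ι, (⋃ i ∈ s, A i).ncard ≤ (⋃ i ∈ s, B i).ncard by
    calc (⋃ i, A i).ncard = (⋃ i ∈ Finset.univ, A i).ncard := by simp
    _ ≤ (⋃ i ∈ Finset.univ, B i).ncard := h _
    _ ≤ T.ncard := Set.ncard_le_ncard
        (Set.iUnion₂_subset fun i _ => hBT i) (Set.toFinite T)
  intro s
  induction s using Finset.induction with
  | empty => simp
  | @insert a s ha ih =>
    have dA : Disjoint (A a) (⋃ i ∈ s, A i) := by
      rw [Set.disjoint_iUnion₂_right]
      exact fun i hi => hA (fun h => ha (h ▸ hi))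
    have dB : Disjoint (B a) (⋃ i ∈ s, B i) := by
      rw [Set.disjoint_iUnion₂_right]
      exact fun i hi => hB (fun h => ha (h ▸ hi))
    rw [Finset.set_biUnion_insert, Finset.set_biUnion_insert,
      Set.ncard_union_eq dA (Set.toFinite _) (Set.toFinite _),
      Set.ncard_union_eq dB (Set.toFinite _) (Set.toFinite _)]
    exact Nat.add_le_add (hle a) ih

theorem union_of_componentwise_min_editing_sets
    {V : Type*} [Fintype V] (G : SimpleGraph V)
    (F : ∀ C : G.ConnectedComponent, Set (Sym2 C.supp))
    (hF : ∀ C : G.ConnectedComponent,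
      IsBiclusterGraph (editGraph (G.induce C.supp) (F C)))
    (hmin : ∀ C : G.ConnectedComponent, ∀ F' : Set (Sym2 C.supp),
      IsBiclusterGraph (editGraph (G.induce C.supp) F') → (F C).ncard ≤ F'.ncard) :
    IsBiclusterGraph
      (editGraph G (⋃ C : G.ConnectedComponent,
        Sym2.map (Subtype.val : C.supp → V) '' F C)) ∧
    ∀ F' : Set (Sym2 V), IsBiclusterGraph (editGraph G F') →
      (⋃ C : G.ConnectedComponent,
        Sym2.map (Subtype.val : C.supp → V) '' F C).ncard ≤ F'.ncard := by
  classical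
  set Ftot : Set (Sym2 V) :=
    ⋃ C : G.ConnectedComponent, Sym2.map (Subtype.val : C.supp → V) '' F C with hFtot
  -- membership in Ftot for a pair inside a component
  have memFtot : ∀ (C : G.ConnectedComponent) (a b : C.supp),
      (s(a.val, b.val) ∈ Ftot ↔ s(a, b) ∈ F C) := by
    intro C a b
    constructor
    · intro h
      rw [hFtot, Set.mem_iUnion] at h
      obtain ⟨D, p, hp, hmap⟩ := h
      induction p with
      | _ u w =>
        rw [Sym2.map_pair_eq, Sym2.eq_iff] at hmap
        have hD : D = C := by
          rcases hmap with ⟨h1, _⟩ | ⟨h1, _⟩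
          · rw [← (ConnectedComponent.mem_supp_iff D u.val).mp u.2,
              ← (ConnectedComponent.mem_supp_iff C a.val).mp a.2, h1]
          · rw [← (ConnectedComponent.mem_supp_iff D u.val).mp u.2,
              ← (ConnectedComponent.mem_supp_iff C b.val).mp b.2, h1]
        subst hD
        have : s(u, w) = s(a, b) := by
          apply Sym2.map.injective Subtype.val_injective
          rw [Sym2.map_pair_eq, Sym2.map_pair_eq]
          rcases hmap with ⟨h1, h2⟩ | ⟨h1, h2⟩
          · rw [h1, h2]
          · rw [h1, h2, Sym2.eq_swap]
        rwa [this] at hp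
    · intro h
      rw [hFtot, Set.mem_iUnion]
      exact ⟨C, s(a, b), h, by rw [Sym2.map_pair_eq]⟩
  -- edited graph adjacency implies same component
  have adj_reach : ∀ x y : V, (editGraph G Ftot).Adj x y → G.Reachable x y := by
    intro x y h
    rw [editGraph_adj, Set.mem_symmDiff] at h
    rcases h.1 with ⟨he, _⟩ | ⟨he, _⟩
    · exact (G.mem_edgeSet.mp he).reachable
    · rw [hFtot, Set.mem_iUnion] at he
      obtain ⟨D, p, hp, hmap⟩ := he
      induction p with
      | _ u w =>
        rw [Sym2.map_pair_eq, Sym2.eq_iff] at hmap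
        have hx : G.connectedComponentMk x = D := by
          rcases hmap with ⟨h1, _⟩ | ⟨_, h1⟩
          · rw [← h1]; exact (ConnectedComponent.mem_supp_iff D u.val).mp u.2
          · rw [← h1]; exact (ConnectedComponent.mem_supp_iff D w.val).mp w.2
        have hy : G.connectedComponentMk y = D := by
          rcases hmap with ⟨_, h1⟩ | ⟨h1, _⟩
          · rw [← h1]; exact (ConnectedComponent.mem_supp_iff D w.val).mp w.2
          · rw [← h1]; exact (ConnectedComponent.mem_supp_iff D u.val).mp u.2
        exact (ConnectedComponent.exact (hx.trans hy.symm))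
  -- adjacency correspondence with component-local edited graph
  have adj_corr : ∀ (C : G.ConnectedComponent) (a b : C.supp),
      ((editGraph (G.induce C.supp) (F C)).Adj a b ↔ (editGraph G Ftot).Adj a.val b.val) := by
    intro C a b
    rw [editGraph_adj, editGraph_adj, Set.mem_symmDiff, Set.mem_symmDiff]
    have e1 : s(a, b) ∈ (G.induce C.supp).edgeSet ↔ s(a.val, b.val) ∈ G.edgeSet := by
      rw [mem_edgeSet, mem_edgeSet]; exact comap_adj
    have e2 := memFtot C a b
    rw [e1, e2, ne_eq, ne_eq, Subtype.ext_iff]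
  -- lift walks in the global edited graph into component-local edited graphs
  have lift : ∀ (C : G.ConnectedComponent) (x y : V) (w : (editGraph G Ftot).Walk x y)
      (hx : x ∈ C.supp), ∃ hy : y ∈ C.supp,
      (editGraph (G.induce C.supp) (F C)).Reachable ⟨x, hx⟩ ⟨y, hy⟩ := by
    intro C x y w
    induction w with
    | nil => intro hx; exact ⟨hx, Reachable.refl _⟩
    | @cons x z y h p ih =>
      intro hx
      have hz : z ∈ C.supp := by
        rw [ConnectedComponent.mem_supp_iff] at hx ⊢
        rw [← hx]
        exact (ConnectedComponent.sound (adj_reach _ _ h).symm)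
      obtain ⟨hy, hr⟩ := ih hz
      exact ⟨hy, (((adj_corr C ⟨x, hx⟩ ⟨z, hz⟩).mpr h).reachable).trans hr⟩
  constructor
  · -- the union is an editing set
    intro v hcard
    set C := G.connectedComponentMk v with hC
    have hv : v ∈ C.supp := rfl
    set H := editGraph (G.induce C.supp) (F C) with hH
    set R := {u : C.supp | H.Reachable ⟨v, hv⟩ u} with hRdef
    have hset : {u | (editGraph G Ftot).Reachable v u} = Subtype.val '' R := by
      apply Set.Subset.antisymm
      · intro u hu
        obtain ⟨w⟩ := hu
        obtain ⟨hy, hr⟩ := lift C v u w hv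
        exact ⟨⟨u, hy⟩, hr, rfl⟩
      · rintro _ ⟨u, hu, rfl⟩
        exact hu.map ⟨Subtype.val, fun h => (adj_corr C _ _).mp h⟩
    rw [hset]
    rw [hset, Set.ncard_image_of_injective R Subtype.val_injective] at hcard
    exact IsBicliqueOn.image Subtype.val Subtype.val_injective
      (fun a _ b _ => adj_corr C a b) (hF C ⟨v, hv⟩ hcard)
  · -- minimality
    intro F' hF'
    set P : ∀ C : G.ConnectedComponent, Set (Sym2 C.supp) :=
      fun C => Sym2.map (Subtype.val : C.supp → V) ⁻¹' F' with hP
    have hgraph : ∀ C : G.ConnectedComponent,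
        editGraph (G.induce C.supp) (P C) = (editGraph G F').induce C.supp := by
      intro C
      ext a b
      rw [editGraph_adj, comap_adj, editGraph_adj, Set.mem_symmDiff, Set.mem_symmDiff]
      have e1 : s(a, b) ∈ (G.induce C.supp).edgeSet ↔ s(a.val, b.val) ∈ G.edgeSet := by
        rw [mem_edgeSet, mem_edgeSet]; exact comap_adj
      have e2 : s(a, b) ∈ P C ↔ s(a.val, b.val) ∈ F' := by
        rw [hP, Set.mem_preimage, Sym2.map_pair_eq]
      rw [e1, e2, ne_eq, ne_eq, Subtype.ext_iff]
      exact Iff.rfl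
    have hPmin : ∀ C, (F C).ncard ≤ (P C).ncard := by
      intro C
      exact hmin C (P C) (by rw [hgraph C]; exact hF'.induce C.supp)
    -- ranges of the Sym2 maps are pairwise disjoint
    have hrange : Pairwise (Function.onFun Disjoint
        (fun C : G.ConnectedComponent => Set.range (Sym2.map (Subtype.val : C.supp → V)))) := by
      intro C D hCD
      rw [Function.onFun, Set.disjoint_left]
      rintro _ ⟨p, rfl⟩ ⟨q, hq⟩
      induction p with
      | _ u w =>
        induction q with
        | _ u' w' =>
          rw [Sym2.map_pair_eq, Sym2.map_pair_eq, Sym2.eq_iff] at hq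
          apply hCD
          have hu : u'.val ∈ C.supp := by
            rcases hq with ⟨h1, _⟩ | ⟨h1, _⟩
            · rw [h1]; exact u.2
            · rw [h1]; exact w.2
          rw [← (ConnectedComponent.mem_supp_iff C u'.val).mp hu,
            (ConnectedComponent.mem_supp_iff D u'.val).mp u'.2]
    have hA : Pairwise (Function.onFun Disjoint
        (fun C : G.ConnectedComponent => Sym2.map (Subtype.val : C.supp → V) '' F C)) :=
      fun C D h => ((hrange h).mono (Set.image_subset_range _ _) (Set.image_subset_range _ _))
    have hB : Pairwise (Function.onFun Disjoint
        (fun C : G.ConnectedComponent => Sym2.map (Subtype.val : C.supp → V) '' P C)) :=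
      fun C D h => ((hrange h).mono (Set.image_subset_range _ _) (Set.image_subset_range _ _))
    refine ncard_iUnion_le_of_pairwise _ _ hA hB ?_ F' ?_
    · intro C
      rw [Set.ncard_image_of_injective _ (Sym2.map.injective Subtype.val_injective),
        Set.ncard_image_of_injective _ (Sym2.map.injective Subtype.val_injective)]
      exact hPmin C
    · intro C
      exact Set.image_preimage_subset _ _
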